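/- Let (X,d_X), (Y,d_Y) be metric spaces with Y separable. A function f : X → Y is of Baire class 1 if and only if it is the uniform limit of a sequence of Δ⁰₂-functions, i.e. of functions g : X → Y such that g⁻¹(A) is an Fσ subset of X for every Fσ set A ⊆ Y. -/

import Mathlib

/-!
Backward direction: a `Δ⁰₂`-function is of Baire class 1 because open sets of a metric space
are `Fσ`, and Baire class 1 is closed under uniform limits: if `dist (f x) (gₘ x) < 1/(m+1)`
for all `x`, then `f⁻¹ U = ⋃ₘ gₘ⁻¹ (Y \ cthickening (1/(m+1)) Uᶜ)`.

Forward direction: for `ε > 0`, cover `Y` by the `ε`-balls around a dense sequence; the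
preimages of these balls are `Fσ`, so `X` is covered by a sequence of closed sets `Gᵢ` on each
of which `f` stays `ε`-close to a point `cᵢ`. Sending `x` to `cᵢ` for the first `i` with
`x ∈ Gᵢ` is a `Δ⁰₂`-function, since `{x | first index = i} = Gᵢ \ ⋃_{j<i} Gⱼ` is `Fσ`.
-/

open Set Filter Topology

def IsFsigma {X : Type*} [TopologicalSpace X] (A : Set X) : Prop :=
  ∃ F : ℕ → Set X, (∀ n, IsClosed (F n)) ∧ A = ⋃ n, F n

section Fsigma

variable {X : Type*} [TopologicalSpace X]

theorem isFsigma_iff_isGδ_compl {A : Set X} : IsFsigma A ↔ IsGδ Aᶜ := by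
  constructor
  · rintro ⟨F, hF, rfl⟩
    rw [compl_iUnion]
    exact .iInter_of_isOpen fun n => (hF n).isOpen_compl
  · intro h
    obtain ⟨U, hU, hAU⟩ := isGδ_iff_eq_iInter_nat.1 h
    exact ⟨fun n => (U n)ᶜ, fun n => (hU n).isClosed_compl,
      by rw [← compl_iInter, ← hAU, compl_compl]⟩

theorem IsClosed.isFsigma {A : Set X} (h : IsClosed A) : IsFsigma A :=
  ⟨fun _ => A, fun _ => h, (iUnion_const A).symm⟩

theorem IsOpen.isFsigma [PerfectlyNormalSpace X] {U : Set X} (h : IsOpen U) : IsFsigma U :=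
  isFsigma_iff_isGδ_compl.2 h.isClosed_compl.isGδ

theorem IsFsigma.iUnion {ι : Sort*} [Countable ι] {A : ι → Set X} (h : ∀ i, IsFsigma (A i)) :
    IsFsigma (⋃ i, A i) := by
  simp only [isFsigma_iff_isGδ_compl, compl_iUnion] at h ⊢
  exact .iInter h

theorem IsFsigma.inter {A B : Set X} (hA : IsFsigma A) (hB : IsFsigma B) : IsFsigma (A ∩ B) := by
  rw [isFsigma_iff_isGδ_compl, compl_inter] at *
  exact hA.union hB

end Fsigma

def IsBaireClassOne {X Y : Type*} [TopologicalSpace X] [TopologicalSpace Y] (f : X → Y) : Prop :=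
  ∀ U : Set Y, IsOpen U → IsFsigma (f ⁻¹' U)

def IsDeltaTwo {X Y : Type*} [TopologicalSpace X] [TopologicalSpace Y] (f : X → Y) : Prop :=
  ∀ A : Set Y, IsFsigma A → IsFsigma (f ⁻¹' A)

section BackwardDirection

variable {X Y : Type*} [PseudoMetricSpace Y]

theorem IsDeltaTwo.isBaireClassOne [TopologicalSpace X] {f : X → Y} (hf : IsDeltaTwo f) :
    IsBaireClassOne f :=
  fun _ hU => hf _ hU.isFsigma

theorem preimage_eq_iUnion_preimage_compl_cthickening {f : X → Y} {g : ℕ → X → Y}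
    (hg : ∀ m x, dist (f x) (g m x) < 1 / (m + 1)) {U : Set Y} (hU : IsOpen U) :
    f ⁻¹' U = ⋃ m : ℕ, g m ⁻¹' (Metric.cthickening (1 / (m + 1)) Uᶜ)ᶜ := by
  ext x
  simp only [mem_preimage, mem_iUnion, mem_compl_iff]
  constructor
  · intro hx
    obtain ⟨r, hr, hball⟩ := Metric.isOpen_iff.1 hU (f x) hx
    obtain ⟨m, hm⟩ := exists_nat_one_div_lt (by positivity : 0 < r / 3)
    refine ⟨m, fun hgx => ?_⟩
    have hδ : (0 : ℝ) < 1 / (m + 1) := Nat.one_div_pos_of_nat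
    obtain ⟨w, hwU, hw⟩ := Metric.mem_thickening_iff.1 <| Metric.cthickening_subset_thickening'
      (δ₂ := 2 * (1 / (m + 1))) (by positivity) (by linarith) _ hgx
    have : dist (f x) w < r := by linarith [dist_triangle (f x) (g m x) w, hg m x]
    exact hwU (hball (Metric.mem_ball.2 (by rwa [dist_comm])))
  · rintro ⟨m, hm⟩
    by_contra hx
    refine hm (Metric.mem_cthickening_of_dist_le _ _ _ _ hx ?_)
    rw [dist_comm]
    exact (hg m x).le

theorem IsBaireClassOne.of_tendstoUniformly [TopologicalSpace X] {f : X → Y} {g : ℕ → X → Y}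
    (hg : ∀ k, IsBaireClassOne (g k)) (hlim : TendstoUniformly g f atTop) :
    IsBaireClassOne f := by
  intro U hU
  have hclose (m : ℕ) : ∃ k, ∀ x, dist (f x) (g k x) < 1 / (m + 1) :=
    (Metric.tendstoUniformly_iff.1 hlim _ Nat.one_div_pos_of_nat).exists
  choose k hk using hclose
  rw [preimage_eq_iUnion_preimage_compl_cthickening hk hU]
  exact .iUnion fun m => hg (k m) _ Metric.isClosed_cthickening.isOpen_compl

end BackwardDirection

section ForwardDirection

variable {X Y : Type*} [TopologicalSpace X] [PseudoMetricSpace Y]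

open Classical in
theorem isFsigma_setOf_find_mem [PerfectlyNormalSpace X] {G : ℕ → Set X}
    (hG : ∀ i, IsClosed (G i)) (hcover : ∀ x, ∃ i, x ∈ G i) (S : Set ℕ) :
    IsFsigma {x | Nat.find (hcover x) ∈ S} := by
  have hfiber (i : ℕ) : {x | Nat.find (hcover x) = i} = G i ∩ (⋃ j < i, G j)ᶜ := by
    ext x
    simp [Nat.find_eq_iff]
  have hS : {x | Nat.find (hcover x) ∈ S} = ⋃ i ∈ S, {x | Nat.find (hcover x) = i} := by
    ext x
    simp
  rw [hS]
  refine .iUnion fun i => .iUnion fun _ => ?_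
  rw [hfiber]
  exact (hG i).isFsigma.inter
    ((finite_lt_nat i).isClosed_biUnion fun j _ => hG j).isOpen_compl.isFsigma

theorem IsBaireClassOne.exists_closed_cover_dist_lt [TopologicalSpace.SeparableSpace Y]
    [Nonempty Y] {f : X → Y} (hf : IsBaireClassOne f) {ε : ℝ} (hε : 0 < ε) :
    ∃ (G : ℕ → Set X) (c : ℕ → Y), (∀ i, IsClosed (G i)) ∧ (∀ x, ∃ i, x ∈ G i) ∧
      ∀ i, ∀ x ∈ G i, dist (f x) (c i) < ε := by
  set y := TopologicalSpace.denseSeq Y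
  choose F hF hFball using fun n => hf _ (Metric.isOpen_ball (x := y n) (ε := ε))
  refine ⟨fun i => F i.unpair.1 i.unpair.2, fun i => y i.unpair.1, fun i => hF _ _, fun x => ?_,
    fun i x hx => ?_⟩
  · obtain ⟨n, hn⟩ := (TopologicalSpace.denseRange_denseSeq Y).exists_dist_lt (f x) hε
    obtain ⟨m, hm⟩ := mem_iUnion.1 (hFball n ▸ hn : x ∈ ⋃ m, F n m)
    exact ⟨Nat.pair n m, by simpa using hm⟩
  · exact (hFball _ ▸ mem_iUnion.2 ⟨_, hx⟩ : x ∈ f ⁻¹' Metric.ball _ ε)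

open Classical in
theorem IsBaireClassOne.exists_isDeltaTwo_dist_lt [PerfectlyNormalSpace X]
    [TopologicalSpace.SeparableSpace Y] {f : X → Y} (hf : IsBaireClassOne f) {ε : ℝ}
    (hε : 0 < ε) : ∃ g : X → Y, IsDeltaTwo g ∧ ∀ x, dist (f x) (g x) < ε := by
  cases isEmpty_or_nonempty X
  · exact ⟨f, fun A _ => (Subsingleton.elim _ ∅ : f ⁻¹' A = ∅) ▸ isClosed_empty.isFsigma,
      isEmptyElim⟩
  have : Nonempty Y := .map f ‹_›
  obtain ⟨G, c, hG, hcover, hc⟩ := hf.exists_closed_cover_dist_lt hε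
  exact ⟨fun x => c (Nat.find (hcover x)),
    fun A _ => isFsigma_setOf_find_mem hG hcover (c ⁻¹' A), fun x => hc _ x (Nat.find_spec (hcover x))⟩

theorem IsBaireClassOne.exists_isDeltaTwo_tendstoUniformly [PerfectlyNormalSpace X]
    [TopologicalSpace.SeparableSpace Y] {f : X → Y} (hf : IsBaireClassOne f) :
    ∃ g : ℕ → X → Y, (∀ k, IsDeltaTwo (g k)) ∧ TendstoUniformly g f atTop := by
  choose g hg hfg using
    fun k : ℕ => hf.exists_isDeltaTwo_dist_lt (Nat.one_div_pos_of_nat (n := k))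
  refine ⟨g, hg, Metric.tendstoUniformly_iff.2 fun ε hε => ?_⟩
  obtain ⟨k₀, hk₀⟩ := exists_nat_one_div_lt hε
  filter_upwards [eventually_ge_atTop k₀] with k hk x
  calc dist (f x) (g k x) < 1 / (k + 1) := hfg k x
    _ ≤ 1 / (k₀ + 1) := Nat.one_div_le_one_div hk
    _ < ε := hk₀

end ForwardDirection

theorem baire_one_iff_uniform_limit_delta_two
    {X Y : Type*} [MetricSpace X] [MetricSpace Y] [TopologicalSpace.SeparableSpace Y]
    (f : X → Y) :
    (∀ U : Set Y, IsOpen U → IsFsigma (f ⁻¹' U)) ↔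
      ∃ g : ℕ → X → Y,
        (∀ k, ∀ A : Set Y, IsFsigma A → IsFsigma (g k ⁻¹' A)) ∧
        TendstoUniformly g f atTop :=
  ⟨IsBaireClassOne.exists_isDeltaTwo_tendstoUniformly,
    fun ⟨_, hg, hlim⟩ =>
      IsBaireClassOne.of_tendstoUniformly (fun k => IsDeltaTwo.isBaireClassOne (hg k)) hlim⟩
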